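/- arXiv:2210.03714 — 6 statements merged into one kernel-verified Lean document; each statement's English description precedes it below -/
import Mathlib

section
/- Let B be a d\times d complex matrix, v a vector in \mathbb{C}^d, and f(z) = \sum_{k\ge 0} a_k z^k a power series with radius of convergence greater than the operator norm \|B\|. Let c_1, ..., c_P and b_1, ..., b_P be real numbers with |c_i| \|B\| < 1 for all i, set \alpha_k = \sum_{i=1}^P b_i c_i^k, and assume \sum_{k\ge 0} |a_k - \alpha_k| \|B\|^k < \infty. If the vectors v_1, ..., v_P satisfy the linear systems (I - c_i B) v_i = v for each i, then \|f(B)v - \sum_{i=1}^P b_i v_i\| \le \left( \sum_{k=0}^{\infty} |a_k - \alpha_k| \|B\|^k \right) \|v\|. -/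
open scoped Matrix Matrix.Norms.L2Operator

/-!
Each `w i` is the Neumann series `∑ₖ (c i • B)ᵏ v`, so `∑ i, b i • w i = ∑ₖ α k • Bᵏ v`.
Since both `∑ₖ (a k - α k) • Bᵏ` and `∑ₖ α k • Bᵏ` converge, the error is `D v` with
`D = ∑ₖ (a k - α k) • Bᵏ`, and `‖D‖ ≤ ∑ₖ ‖a k - α k‖ ‖B‖ᵏ` termwise.
-/

theorem CStarRing.norm_one_le {E : Type*} [NormedRing E] [StarRing E] [CStarRing E] :
    ‖(1 : E)‖ ≤ 1 := by
  nontriviality E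
  exact CStarRing.norm_one.le

section NormedRing

variable {R : Type*} [NormedRing R]

theorem norm_pow_le_of_norm_one_le (h1 : ‖(1 : R)‖ ≤ 1) (x : R) : ∀ n : ℕ, ‖x ^ n‖ ≤ ‖x‖ ^ n
  | 0 => by simpa using h1
  | n + 1 => norm_pow_le' x n.succ_pos

end NormedRing

section NormedAlgebra

variable {𝕜 A : Type*} [NormedField 𝕜] [NormedRing A] [NormedAlgebra 𝕜 A]

theorem norm_smul_pow_le (h1 : ‖(1 : A)‖ ≤ 1) (a : 𝕜) (x : A) (k : ℕ) :
    ‖a • x ^ k‖ ≤ ‖a‖ * ‖x‖ ^ k := by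
  rw [norm_smul]
  gcongr
  exact norm_pow_le_of_norm_one_le h1 x k

theorem summable_smul_pow_of_summable_norm_mul_pow [CompleteSpace A] (h1 : ‖(1 : A)‖ ≤ 1)
    {a : ℕ → 𝕜} {x : A} (ha : Summable fun k => ‖a k‖ * ‖x‖ ^ k) :
    Summable fun k => a k • x ^ k :=
  ha.of_norm_bounded fun k => norm_smul_pow_le h1 (a k) x k

theorem norm_le_tsum_of_hasSum_smul_pow (h1 : ‖(1 : A)‖ ≤ 1) {a : ℕ → 𝕜} {x D : A}
    (hD : HasSum (fun k => a k • x ^ k) D) (ha : Summable fun k => ‖a k‖ * ‖x‖ ^ k) :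
    ‖D‖ ≤ ∑' k, ‖a k‖ * ‖x‖ ^ k :=
  hD.norm_le_of_bounded ha.hasSum fun k => norm_smul_pow_le h1 (a k) x k

theorem hasSum_sum_mul_pow_smul_pow [CompleteSpace A] {ι : Type*} [Fintype ι] (x : A)
    (b c : ι → 𝕜) (hc : ∀ i, ‖c i‖ * ‖x‖ < 1) :
    HasSum (fun k => (∑ i, b i * c i ^ k) • x ^ k) (∑ i, b i • ∑' k, (c i • x) ^ k) := by
  have hgeom : ∀ i, HasSum (fun k => b i • (c i • x) ^ k) (b i • ∑' k, (c i • x) ^ k) :=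
    fun i => ((summable_geometric_of_norm_lt_one (by rw [norm_smul]; exact hc i)).hasSum).const_smul (b i)
  convert hasSum_sum fun i _ => hgeom i using 1
  ext k
  simp only [Finset.sum_smul, smul_pow, smul_smul]

end NormedAlgebra

theorem Matrix.eq_tsum_geometric_mulVec {𝕜 n : Type*} [RCLike 𝕜] [Fintype n] [DecidableEq n]
    {M : Matrix n n 𝕜} (hM : ‖M‖ < 1) {v w : n → 𝕜} (h : (1 - M) *ᵥ w = v) :
    w = (∑' k, M ^ k) *ᵥ v := by
  rw [← h, mulVec_mulVec, geom_series_mul_neg M hM, one_mulVec]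

theorem matrix_vector_fractional_error_bound_general (d : ℕ)
    (B : Matrix (Fin d) (Fin d) ℂ) (a : ℕ → ℂ)
    (P : ℕ) (c b : Fin P → ℝ)
    (hc : ∀ i, |c i| * ‖B‖ < 1)
    (α : ℕ → ℝ) (hα : ∀ k : ℕ, α k = ∑ i, b i * c i ^ k)
    (hsum : Summable fun k : ℕ => ‖a k - (α k : ℂ)‖ * ‖B‖ ^ k)
    (v : Fin d → ℂ) (w : Fin P → Fin d → ℂ)
    (hw : ∀ i, (1 - (c i : ℂ) • B).mulVec (w i) = v) :
    ‖(EuclideanSpace.equiv (Fin d) ℂ).symm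
        ((∑' k : ℕ, a k • B ^ k).mulVec v - ∑ i, (b i : ℂ) • w i)‖ ≤
      (∑' k : ℕ, ‖a k - (α k : ℂ)‖ * ‖B‖ ^ k) *
        ‖(EuclideanSpace.equiv (Fin d) ℂ).symm v‖ := by
  have h1 : ‖(1 : Matrix (Fin d) (Fin d) ℂ)‖ ≤ 1 := CStarRing.norm_one_le
  have hc' : ∀ i, ‖(c i : ℂ)‖ * ‖B‖ < 1 := by simpa only [Complex.norm_real, Real.norm_eq_abs]
  set S := fun i => ∑' k, ((c i : ℂ) • B) ^ k
  obtain ⟨D, hD⟩ := summable_smul_pow_of_summable_norm_mul_pow h1 hsum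
  have hαS : HasSum (fun k => (α k : ℂ) • B ^ k) (∑ i, (b i : ℂ) • S i) := by
    simpa only [hα, Complex.ofReal_sum, Complex.ofReal_mul, Complex.ofReal_pow] using
      hasSum_sum_mul_pow_smul_pow B (fun i => (b i : ℂ)) (fun i => (c i : ℂ)) hc'
  have hf : ∑' k, a k • B ^ k = D + ∑ i, (b i : ℂ) • S i := by
    simpa only [← add_smul, sub_add_cancel] using (hD.add hαS).tsum_eq
  have hwS : ∀ i, w i = S i *ᵥ v := fun i =>
    Matrix.eq_tsum_geometric_mulVec (by rw [norm_smul]; exact hc' i) (hw i)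
  have herr : (∑' k, a k • B ^ k) *ᵥ v - ∑ i, (b i : ℂ) • w i = D *ᵥ v := by
    simp only [hf, hwS, Matrix.add_mulVec, Matrix.sum_mulVec, Matrix.smul_mulVec,
      add_sub_cancel_right]
  rw [herr]
  calc _ ≤ ‖D‖ * ‖(EuclideanSpace.equiv (Fin d) ℂ).symm v‖ := Matrix.l2_opNorm_mulVec D _
    _ ≤ _ := by gcongr; exact norm_le_tsum_of_hasSum_smul_pow h1 hD hsum

/-- Error bound for the fractional approximation of the action of a matrix function
on a vector: if `f(z) = ∑ a_k z^k` has radius of convergence greater than the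
operator 2-norm `‖B‖`, `|c i| * ‖B‖ < 1` for all `i`, `α k = ∑ i, b i * c i ^ k`,
`∑ k, |a k - α k| ‖B‖^k < ∞`, and the vectors `w i` solve `(I - c i • B) (w i) = v`,
then `‖f(B) v - ∑ i, b i • w i‖ ≤ (∑ k, |a k - α k| ‖B‖^k) * ‖v‖` (Euclidean norms). -/
theorem matrix_vector_fractional_error_bound (d : ℕ)
    (B : Matrix (Fin d) (Fin d) ℂ) (a : ℕ → ℂ)
    (hconv : ∃ r : ℝ, ‖B‖ < r ∧ Summable fun k : ℕ => ‖a k‖ * r ^ k)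
    (P : ℕ) (c b : Fin P → ℝ)
    (hc : ∀ i, |c i| * ‖B‖ < 1)
    (α : ℕ → ℝ) (hα : ∀ k : ℕ, α k = ∑ i, b i * c i ^ k)
    (hsum : Summable fun k : ℕ => ‖a k - (α k : ℂ)‖ * ‖B‖ ^ k)
    (v : Fin d → ℂ) (w : Fin P → Fin d → ℂ)
    (hw : ∀ i, (1 - (c i : ℂ) • B).mulVec (w i) = v) :
    ‖(EuclideanSpace.equiv (Fin d) ℂ).symm
        ((∑' k : ℕ, a k • B ^ k).mulVec v - ∑ i, (b i : ℂ) • w i)‖ ≤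
      (∑' k : ℕ, ‖a k - (α k : ℂ)‖ * ‖B‖ ^ k) *
        ‖(EuclideanSpace.equiv (Fin d) ℂ).symm v‖ :=
  matrix_vector_fractional_error_bound_general d B a P c b hc α hα hsum v w hw
end

section
/- The rational function \tilde r_{2,2}(x) = (1 + x/10 + x^2/60)/(1 - 2x/5 + x^2/20) approximates the function \varphi_1 to order 4: \tilde r_{2,2}(x) - \varphi_1(x) = O(x^5) as x \to 0, i.e. there exist C, \delta > 0 such that |\tilde r_{2,2}(x) - \varphi_1(x)| \le C|x|^5 for |x| < \delta. -/
noncomputable def phi1R (x : ℝ) : ℝ :=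
  ∑' k : ℕ, x ^ k / ((k + 1).factorial : ℝ)

lemma exp_tsum (x : ℝ) : Real.exp x = ∑' n : ℕ, x ^ n / (n.factorial : ℝ) := by
  rw [Real.exp_eq_exp_ℝ, NormedSpace.exp_eq_tsum_div]

lemma phi1R_summable (x : ℝ) : Summable (fun k : ℕ => x ^ k / (((k+1).factorial : ℕ) : ℝ)) := by
  have h1 : Summable (fun k : ℕ => |x| ^ k / (k.factorial : ℝ)) :=
    Real.summable_pow_div_factorial _
  refine Summable.of_abs (h1.of_nonneg_of_le (fun k => abs_nonneg _) (fun k => ?_))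
  rw [abs_div, abs_pow, Nat.abs_cast]
  have hk : (k.factorial : ℝ) ≤ ((k+1).factorial : ℝ) := by
    exact_mod_cast Nat.factorial_le (Nat.le_succ k)
  have hkpos : (0:ℝ) < (k.factorial : ℝ) := by
    exact_mod_cast k.factorial_pos
  exact div_le_div_of_nonneg_left (by positivity) hkpos hk

lemma mul_phi1R (x : ℝ) : x * phi1R x = Real.exp x - 1 := by
  have hs : Summable (fun n : ℕ => x ^ n / (n.factorial : ℝ)) := by
    have h1 : Summable (fun k : ℕ => |x| ^ k / (k.factorial : ℝ)) :=
      Real.summable_pow_div_factorial _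
    refine Summable.of_abs ?_
    simpa [abs_div, abs_pow] using h1
  have h0 : ∑' n : ℕ, x ^ n / (n.factorial : ℝ)
      = x ^ 0 / ((0:ℕ).factorial : ℝ) + ∑' n : ℕ, x ^ (n+1) / ((n+1).factorial : ℝ) :=
    Summable.tsum_eq_zero_add hs
  have h2 : x * phi1R x = ∑' n : ℕ, x ^ (n+1) / ((n+1).factorial : ℝ) := by
    rw [phi1R, ← tsum_mul_left]
    exact tsum_congr fun k => by ring
  rw [h2, exp_tsum]
  rw [h0]
  simp

lemma phi1R_zero : phi1R 0 = 1 := by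
  rw [phi1R, tsum_eq_single 0]
  · simp
  · intro k hk
    simp [zero_pow hk]

/-- The rational function `(1 + x/10 + x²/60)/(1 - 2x/5 + x²/20)` approximates
`φ₁` to order 4 at the origin. -/
theorem pade22_phi1_order4 :
    ∃ C > (0 : ℝ), ∃ δ > (0 : ℝ), ∀ x : ℝ, |x| < δ →
      |(1 + x / 10 + x ^ 2 / 60) / (1 - 2 * x / 5 + x ^ 2 / 20) - phi1R x| ≤
        C * |x| ^ 5 := by
  refine ⟨1, one_pos, 1, one_pos, fun x hx => ?_⟩
  by_cases hx0 : x = 0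
  · subst hx0
    simp [phi1R_zero]
  · have hx1 : |x| ≤ 1 := hx.le
    obtain ⟨hxl, hxr⟩ := abs_lt.mp hx
    set q : ℝ := 1 - 2 * x / 5 + x ^ 2 / 20 with hqdef
    have hq35 : (3:ℝ)/5 ≤ q := by nlinarith [sq_nonneg x]
    have hqpos : 0 < q := lt_of_lt_of_le (by norm_num) hq35
    have hq0 : q ≠ 0 := ne_of_gt hqpos
    have hqub : q ≤ 29/20 := by nlinarith
    have hphi : phi1R x = (Real.exp x - 1) / x := by
      field_simp
      linarith [mul_phi1R x]
    have hE : ∑ m ∈ Finset.range 6, x ^ m / ((m.factorial : ℕ) : ℝ)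
        = 1 + x + x^2/2 + x^3/6 + x^4/24 + x^5/120 := by
      simp [Finset.sum_range_succ, Nat.factorial]
    have hR : |Real.exp x - (1 + x + x^2/2 + x^3/6 + x^4/24 + x^5/120)| ≤ |x|^6 * (7/4320) := by
      have := Real.exp_bound hx1 (n := 6) (by norm_num)
      rw [hE] at this
      convert this using 2
      all_goals norm_num [Nat.factorial]
    set E : ℝ := 1 + x + x^2/2 + x^3/6 + x^4/24 + x^5/120 with hEdef
    set g : ℝ := (1 + x / 10 + x ^ 2 / 60) * x - (Real.exp x - 1) * q with hgdef
    have hsplit : g = x^6 * (1/800 - x/2400) + (E - Real.exp x) * q := by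
      rw [hgdef, hEdef, hqdef]; ring
    have hgb : |g| ≤ |x|^6 * (3/5) := by
      rw [hsplit]
      have h1 : |x^6 * (1/800 - x/2400)| ≤ |x|^6 * (1/600) := by
        rw [abs_mul, abs_pow]
        gcongr
        rw [abs_le]; constructor <;> nlinarith
      have h2 : |(E - Real.exp x) * q| ≤ |x|^6 * (7/4320) * (29/20) := by
        rw [abs_mul, abs_sub_comm]
        have : |q| = q := abs_of_pos hqpos
        rw [this]
        exact mul_le_mul hR hqub (le_of_lt hqpos) (by positivity)
      calc |x^6 * (1/800 - x/2400) + (E - Real.exp x) * q|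
          ≤ |x^6 * (1/800 - x/2400)| + |(E - Real.exp x) * q| := abs_add_le _ _
        _ ≤ |x|^6 * (1/600) + |x|^6 * (7/4320) * (29/20) := by linarith
        _ ≤ |x|^6 * (3/5) := by nlinarith [pow_nonneg (abs_nonneg x) 6]
    have hdiff : (1 + x / 10 + x ^ 2 / 60) / q - phi1R x = g / (q * x) := by
      rw [hphi, div_sub_div _ _ hq0 hx0, hgdef]
      ring_nf
    rw [hdiff, abs_div, abs_mul, abs_of_pos hqpos]
    rw [div_le_iff₀ (by positivity : (0:ℝ) < q * |x|)]
    have hx6 : |x|^6 = |x|^5 * |x| := by ring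
    have h35 : (3:ℝ)/5 * |x| ≤ q * |x| := by
      apply mul_le_mul_of_nonneg_right hq35 (abs_nonneg x)
    calc |g| ≤ |x|^6 * (3/5) := hgb
      _ = |x|^5 * ((3/5) * |x|) := by ring
      _ ≤ |x|^5 * (q * |x|) := by
          apply mul_le_mul_of_nonneg_left h35 (by positivity)
      _ = 1 * |x|^5 * (q * |x|) := by ring
end

section
/- With c_i = 1/(i+1) for i = 1, ..., 5 and the coefficients b_1 = 7/18, b_2 = -9, b_3 = 128/3, b_4 = -500/9, b_5 = 45/2, one has \sum_{i=1}^5 b_i c_i^k = 1/(k+1)! for every k = 0, 1, 2, 3, 4; consequently the rational function r(x) = \sum_{i=1}^5 b_i/(1 - c_i x) satisfies r(x) - \varphi_1(x) = O(x^5) as x \to 0. -/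
/-!
Expanding each `bᵢ/(1 - cᵢx)` as a geometric series gives `r(x) - φ₁(x) = ∑ₖ aₖ xᵏ` with
`aₖ = ∑ᵢ bᵢcᵢᵏ - 1/(k+1)!`. The moment conditions kill `a₀, …, a₄`, and since every `|cᵢ| ≤ 1`
all `aₖ` are bounded by `M = ∑ᵢ |bᵢ| + 1`; for `|x| ≤ 1/2` the remaining tail is then at most
`2M|x|⁵` by comparison with a geometric series.
-/

open Finset

section PowerSeries

variable {𝕜 : Type*} [NormedField 𝕜]

theorem hasSum_sum_div_one_sub {ι : Type*} [Fintype ι] (b c : ι → 𝕜) {x : 𝕜}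
    (h : ∀ i, ‖c i * x‖ < 1) :
    HasSum (fun k => (∑ i, b i * c i ^ k) * x ^ k) (∑ i, b i / (1 - c i * x)) := by
  have hgeom (i : ι) : HasSum (fun k => b i * (c i * x) ^ k) (b i / (1 - c i * x)) := by
    simpa only [div_eq_mul_inv] using (hasSum_geometric_of_norm_lt_one (h i)).mul_left (b i)
  refine (hasSum_sum fun i (_ : i ∈ univ) => hgeom i).congr_fun fun k => ?_
  simp only [sum_mul, mul_pow, mul_assoc]

theorem norm_le_of_hasSum_of_coeff_eq_zero {a : ℕ → 𝕜} {x s : 𝕜} {n : ℕ} {M ρ : ℝ}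
    (hs : HasSum (fun k => a k * x ^ k) s) (ha_zero : ∀ k < n, a k = 0)
    (ha_le : ∀ k, ‖a k‖ ≤ M) (hxρ : ‖x‖ ≤ ρ) (hρ : ρ < 1) :
    ‖s‖ ≤ M / (1 - ρ) * ‖x‖ ^ n := by
  have hhead : ∑ k ∈ range n, a k * x ^ k = 0 :=
    sum_eq_zero fun k hk => by rw [ha_zero k (mem_range.mp hk), zero_mul]
  have htail := (hasSum_nat_add_iff' n).mpr hs
  rw [hhead, sub_zero] at htail
  have hgeom :=
    (hasSum_geometric_of_lt_one ((norm_nonneg x).trans hxρ) hρ).mul_left (M * ‖x‖ ^ n)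
  refine (htail.norm_le_of_bounded hgeom fun k => ?_).trans_eq (by ring)
  have hM : 0 ≤ M := (norm_nonneg _).trans (ha_le 0)
  calc ‖a (k + n) * x ^ (k + n)‖ = ‖a (k + n)‖ * ‖x‖ ^ n * ‖x‖ ^ k := by
        rw [norm_mul, norm_pow, pow_add]; ring
    _ ≤ M * ‖x‖ ^ n * ρ ^ k := by gcongr; exact ha_le _

end PowerSeries

theorem hasSum_phi1R (x : ℝ) :
    HasSum (fun k : ℕ => x ^ k / ((k + 1).factorial : ℝ)) (phi1R x) := by
  refine (Summable.of_norm_bounded (Real.summable_pow_div_factorial |x|) fun k => ?_).hasSum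
  rw [Real.norm_eq_abs, abs_div, abs_pow, Nat.abs_cast]
  gcongr
  exact k.le_succ

theorem abs_sum_mul_pow_sub_inv_factorial_le {ι : Type*} [Fintype ι] (b c : ι → ℝ)
    (hc : ∀ i, |c i| ≤ 1) (k : ℕ) :
    |∑ i, b i * c i ^ k - 1 / ((k + 1).factorial : ℝ)| ≤ ∑ i, |b i| + 1 := by
  have hsum : |∑ i, b i * c i ^ k| ≤ ∑ i, |b i| :=
    (abs_sum_le_sum_abs _ _).trans <| sum_le_sum fun i _ => by
      rw [abs_mul, abs_pow]
      exact mul_le_of_le_one_right (abs_nonneg _) (pow_le_one₀ (abs_nonneg _) (hc i))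
  have hfact : |1 / ((k + 1).factorial : ℝ)| ≤ 1 := by
    rw [abs_of_nonneg (by positivity)]
    exact div_le_one_of_le₀ (mod_cast (k + 1).factorial_pos) (by positivity)
  exact (abs_sub _ _).trans (add_le_add hsum hfact)

theorem exists_abs_sum_div_one_sub_sub_phi1R_le {ι : Type*} [Fintype ι] (b c : ι → ℝ) (n : ℕ)
    (hc : ∀ i, |c i| ≤ 1)
    (hmoment : ∀ k < n, ∑ i, b i * c i ^ k = 1 / ((k + 1).factorial : ℝ)) :
    ∃ C > (0 : ℝ), ∃ δ > (0 : ℝ), ∀ x : ℝ, |x| < δ →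
      |(∑ i, b i / (1 - c i * x)) - phi1R x| ≤ C * |x| ^ n := by
  refine ⟨(∑ i, |b i| + 1) / (1 - 1 / 2), by positivity, 1 / 2, by norm_num, fun x hx => ?_⟩
  have hcx (i : ι) : ‖c i * x‖ < 1 := by
    rw [Real.norm_eq_abs, abs_mul]
    exact mul_lt_one_of_nonneg_of_lt_one_right (hc i) (abs_nonneg x) (hx.trans one_half_lt_one)
  have hdiff : HasSum (fun k => (∑ i, b i * c i ^ k - 1 / ((k + 1).factorial : ℝ)) * x ^ k)
      ((∑ i, b i / (1 - c i * x)) - phi1R x) := by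
    refine ((hasSum_sum_div_one_sub b c hcx).sub (hasSum_phi1R x)).congr_fun fun k => ?_
    ring
  exact norm_le_of_hasSum_of_coeff_eq_zero hdiff (fun k hk => sub_eq_zero.mpr (hmoment k hk))
    (abs_sum_mul_pow_sub_inv_factorial_le b c hc) hx.le (by norm_num)

/-- With `cᵢ = 1/(i+1)` for `i = 1, …, 5` and `b = (7/18, -9, 128/3, -500/9, 45/2)`,
the coefficients satisfy `∑ᵢ bᵢ cᵢᵏ = 1/(k+1)!` for `k = 0, …, 4`, and hence
`r(x) = ∑ᵢ bᵢ/(1 - cᵢ x)` approximates `φ₁` to order 4 at the origin. -/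
theorem fractional_phi1_order4_coeffs :
    let c : Fin 5 → ℝ := ![1/2, 1/3, 1/4, 1/5, 1/6]
    let b : Fin 5 → ℝ := ![7/18, -9, 128/3, -500/9, 45/2]
    (∀ k : ℕ, k ≤ 4 → ∑ i, b i * c i ^ k = 1 / ((k + 1).factorial : ℝ)) ∧
      ∃ C > (0 : ℝ), ∃ δ > (0 : ℝ), ∀ x : ℝ, |x| < δ →
        |(∑ i, b i / (1 - c i * x)) - phi1R x| ≤ C * |x| ^ 5 := by
  intro c b
  have hmoment : ∀ k : ℕ, k ≤ 4 → ∑ i, b i * c i ^ k = 1 / ((k + 1).factorial : ℝ) := by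
    intro k hk
    interval_cases k <;> simp [Fin.sum_univ_five, b, c, Nat.factorial] <;> norm_num
  have hc : ∀ i, |c i| ≤ 1 := by
    intro i
    fin_cases i <;> norm_num [c, abs_of_pos]
  exact ⟨hmoment, exists_abs_sum_div_one_sub_sub_phi1R_le b c 5 hc
    fun k hk => hmoment k (Nat.le_of_lt_succ hk)⟩
end

section
/- With the coefficients c_1 = 0, c_2 = 1/5, c_3 = -1/5, c_4 = 2/15, c_5 = -2/15, c_6 = 1/10, c_7 = -1/10, c_8 = 2/25, c_9 = -2/25 and b_1 = -9979069/32256, b_2 = -1995521/254016, b_3 = -392009/254016, b_4 = 520866369/802816, b_5 = 48898161/802816, b_6 = -26686735/11907, b_7 = -3892615/11907, b_8 = 353067578125/195084288, b_9 = 71873828125/195084288, one has \sum_{i=1}^9 b_i c_i^k = 1/k! for every k = 0, 1, ..., 8; consequently r(x) = \sum_{i=1}^9 b_i/(1 - c_i x) satisfies r(x) - e^x = O(x^9) as x \to 0. -/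
private lemma geom_tail9 (y : ℝ) (hy : y ≠ 1) :
    1 / (1 - y) = (∑ k ∈ Finset.range 9, y ^ k) + y ^ 9 / (1 - y) := by
  have h : 1 - y ≠ 0 := sub_ne_zero.mpr (Ne.symm hy)
  have h2 : y - 1 ≠ 0 := fun h' => hy (by linarith [sub_eq_zero.mp h'])
  rw [geom_sum_eq hy]
  field_simp
  ring

/-- The 8th-order fractional approximation to the exponential: with the listed
coefficients `c`, `b`, one has `∑ᵢ bᵢ cᵢᵏ = 1/k!` for `k = 0, …, 8`, and hence
`r(x) = ∑ᵢ bᵢ/(1 - cᵢ x)` approximates `eˣ` to order 8 at the origin. -/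
theorem fractional_exp_order8_coeffs :
    let c : Fin 9 → ℝ := ![0, 1/5, -1/5, 2/15, -2/15, 1/10, -1/10, 2/25, -2/25]
    let b : Fin 9 → ℝ := ![-9979069/32256, -1995521/254016, -392009/254016,
      520866369/802816, 48898161/802816, -26686735/11907, -3892615/11907,
      353067578125/195084288, 71873828125/195084288]
    (∀ k : ℕ, k ≤ 8 → ∑ i, b i * c i ^ k = 1 / (k.factorial : ℝ)) ∧
      ∃ C > (0 : ℝ), ∃ δ > (0 : ℝ), ∀ x : ℝ, |x| < δ →
        |(∑ i, b i / (1 - c i * x)) - Real.exp x| ≤ C * |x| ^ 9 := by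
  intro c b
  have hcoeff : ∀ k : ℕ, k ≤ 8 → ∑ i, b i * c i ^ k = 1 / (k.factorial : ℝ) := by
    intro k hk
    interval_cases k <;>
      · simp only [Fin.sum_univ_succ, Finset.sum_empty, Fin.sum_univ_zero, c, b,
          Matrix.cons_val_zero, Matrix.cons_val_one, Matrix.head_cons, Matrix.cons_val_succ]
        norm_num [Nat.factorial]
  refine ⟨hcoeff, 1, one_pos, 1, one_pos, ?_⟩
  intro x hx
  have hc : ∀ i, |c i| ≤ 1/5 := by
    intro i
    fin_cases i <;>
      norm_num [c, Matrix.cons_val_zero, Matrix.cons_val_one, Matrix.head_cons,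
        Matrix.cons_val_succ, abs_le]
  have hpos : ∀ i, (4:ℝ)/5 < 1 - c i * x := by
    intro i
    have h1 : |c i * x| < 1/5 := by
      rw [abs_mul]
      calc |c i| * |x| ≤ (1/5) * |x| := by
            exact mul_le_mul_of_nonneg_right (hc i) (abs_nonneg x)
        _ < 1/5 := by nlinarith [abs_nonneg x]
    have := abs_lt.mp h1
    linarith [this.2]
  have hne : ∀ i, c i * x ≠ 1 := by
    intro i h; have := hpos i; rw [h] at this; linarith
  -- split each fraction
  have hsplit : (∑ i, b i / (1 - c i * x)) =
      (∑ k ∈ Finset.range 9, x ^ k / (k.factorial : ℝ)) +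
        ∑ i, b i * (c i * x) ^ 9 / (1 - c i * x) := by
    have h1 : ∀ i : Fin 9, b i / (1 - c i * x) =
        (∑ k ∈ Finset.range 9, b i * c i ^ k * x ^ k) +
          b i * (c i * x) ^ 9 / (1 - c i * x) := by
      intro i
      have hg := geom_tail9 (c i * x) (hne i)
      calc b i / (1 - c i * x) = b i * (1 / (1 - c i * x)) := by ring
        _ = b i * ((∑ k ∈ Finset.range 9, (c i * x) ^ k) + (c i * x) ^ 9 / (1 - c i * x)) := by
            rw [hg]
        _ = (∑ k ∈ Finset.range 9, b i * c i ^ k * x ^ k) +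
              b i * (c i * x) ^ 9 / (1 - c i * x) := by
            rw [mul_add, Finset.mul_sum]
            congr 1
            · exact Finset.sum_congr rfl fun k _ => by rw [mul_pow]; ring
            · ring
    rw [Finset.sum_congr rfl fun i _ => h1 i, Finset.sum_add_distrib]
    congr 1
    rw [Finset.sum_comm]
    refine Finset.sum_congr rfl fun k hk => ?_
    rw [← Finset.sum_mul]
    rw [show (∑ i, b i * c i ^ k) = 1 / (k.factorial : ℝ) from
      hcoeff k (Nat.lt_succ_iff.mp (Finset.mem_range.mp hk))]
    ring
  have hx1 : |x| ≤ 1 := le_of_lt hx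
  have hrem := Real.exp_bound hx1 (by norm_num : 0 < 9)
  -- bound each tail term
  have htail : |∑ i, b i * (c i * x) ^ 9 / (1 - c i * x)| ≤ (1/2) * |x| ^ 9 := by
    have hterm : ∀ i : Fin 9, |b i * (c i * x) ^ 9 / (1 - c i * x)| ≤
        (|b i| * |c i| ^ 9 * (5/4)) * |x| ^ 9 := by
      intro i
      rw [abs_div, abs_mul, mul_pow, abs_mul, abs_pow, abs_pow]
      have hd : (4:ℝ)/5 < |1 - c i * x| := by
        rw [abs_of_pos (by linarith [hpos i])]; exact hpos i
      rw [div_le_iff₀ (by linarith : (0:ℝ) < |1 - c i * x|)]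
      have hnn : 0 ≤ |b i| * (|c i| ^ 9 * |x| ^ 9) := by positivity
      nlinarith [abs_nonneg (b i), pow_nonneg (abs_nonneg (c i)) 9,
        pow_nonneg (abs_nonneg x) 9]
    calc |∑ i, b i * (c i * x) ^ 9 / (1 - c i * x)|
        ≤ ∑ i, |b i * (c i * x) ^ 9 / (1 - c i * x)| := Finset.abs_sum_le_sum_abs _ _
      _ ≤ ∑ i, (|b i| * |c i| ^ 9 * (5/4)) * |x| ^ 9 :=
          Finset.sum_le_sum fun i _ => hterm i
      _ = (∑ i, |b i| * |c i| ^ 9 * (5/4)) * |x| ^ 9 := by rw [Finset.sum_mul]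
      _ ≤ (1/2) * |x| ^ 9 := by
          apply mul_le_mul_of_nonneg_right _ (pow_nonneg (abs_nonneg x) 9)
          simp only [Fin.sum_univ_succ, Fin.sum_univ_zero, c, b,
            Matrix.cons_val_zero, Matrix.cons_val_one, Matrix.head_cons, Matrix.cons_val_succ]
          rw [abs_div, abs_div, abs_div, abs_div, abs_div, abs_div, abs_div, abs_div, abs_div]
          simp only [abs_neg]
          norm_num [abs_of_nonneg]
  calc |(∑ i, b i / (1 - c i * x)) - Real.exp x|
      = |(∑ i, b i * (c i * x) ^ 9 / (1 - c i * x)) +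
          ((∑ k ∈ Finset.range 9, x ^ k / (k.factorial : ℝ)) - Real.exp x)| := by
        rw [hsplit]; congr 1; ring
    _ ≤ |∑ i, b i * (c i * x) ^ 9 / (1 - c i * x)| +
          |(∑ k ∈ Finset.range 9, x ^ k / (k.factorial : ℝ)) - Real.exp x| := abs_add_le _ _
    _ ≤ (1/2) * |x| ^ 9 + |x| ^ 9 * ((9+1) / ((Nat.factorial 9 : ℝ) * 9)) := by
        refine add_le_add htail ?_
        rw [abs_sub_comm]; exact_mod_cast hrem
    _ ≤ 1 * |x| ^ 9 := by
        have : (0:ℝ) ≤ |x| ^ 9 := pow_nonneg (abs_nonneg x) 9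
        rw [Nat.factorial]
        norm_num [Nat.factorial]
        nlinarith
end

section
/- Let x_3 = 2/3, x_1 = x_3 (1 + \sqrt{177})/88, x_2 = x_3 (1 + \sqrt{177})/352, x_4 = (-271 + 29\sqrt{177})/(315 x_3), x_5 = 11(-1 + \sqrt{177})/(1260 x_3), x_6 = 11(-9 + \sqrt{177})/(5040 x_3), x_7 = (89 - \sqrt{177})/(5040 x_3^2), y_0 = 1, y_1 = 1, y_2 = (857 - 58\sqrt{177})/630. Then, as polynomials in a real variable X, with B_2 = X^2, B_4 = B_2 (x_1 X + x_2 B_2), and B_8 = (x_3 B_2 + B_4)(x_4 + x_5 X + x_6 B_2 + x_7 B_4), the identity y_0 + y_1 X + y_2 B_2 + B_8 = \sum_{k=0}^{8} X^k/k! holds. -/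
/-- The degree-8 Taylor polynomial of the exponential admits an exact evaluation
scheme with only three polynomial multiplications: with the coefficients below,
`y₀ + y₁ X + y₂ B₂ + B₈ = ∑_{k=0}^{8} Xᵏ/k!` for every real `X`. -/
theorem taylor8_three_product_scheme (X : ℝ) :
    let s : ℝ := Real.sqrt 177
    let x3 : ℝ := 2 / 3
    let x1 : ℝ := x3 * (1 + s) / 88
    let x2 : ℝ := x3 * (1 + s) / 352
    let x4 : ℝ := (-271 + 29 * s) / (315 * x3)
    let x5 : ℝ := 11 * (-1 + s) / (1260 * x3)
    let x6 : ℝ := 11 * (-9 + s) / (5040 * x3)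
    let x7 : ℝ := (89 - s) / (5040 * x3 ^ 2)
    let y0 : ℝ := 1
    let y1 : ℝ := 1
    let y2 : ℝ := (857 - 58 * s) / 630
    let B2 : ℝ := X ^ 2
    let B4 : ℝ := B2 * (x1 * X + x2 * B2)
    let B8 : ℝ := (x3 * B2 + B4) * (x4 + x5 * X + x6 * B2 + x7 * B4)
    y0 + y1 * X + y2 * B2 + B8 =
      ∑ k ∈ Finset.range 9, X ^ k / (k.factorial : ℝ) := by
  have hs : Real.sqrt 177 ^ 2 = 177 := Real.sq_sqrt (by norm_num)
  simp only [Finset.sum_range_succ, Finset.sum_range_zero, Nat.factorial]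
  push_cast
  set s := Real.sqrt 177 with hsdef
  linear_combination ((29/27720)*X^3 + (1/2772)*X^4 + (1/21120)*X^5 + (307/39029760)*X^6
    + (-1/39029760)*X^6*s + (29/26019840)*X^7 + (-1/78059520)*X^7*s + (29/208158720)*X^8
    + (-1/624476160)*X^8*s) * hs
end

section
/- With the coefficients c_1 = 0 and c_i = 1/(i+1) for i = 2, ..., 6 (i.e. c_2 = 1/3, c_3 = 1/4, c_4 = 1/5, c_5 = 1/6, c_6 = 1/7) and b_1 = -43/12, b_2 = 81/32, b_3 = -704/9, b_4 = 23125/48, b_5 = -810, b_6 = 117649/288, one has \sum_{i=1}^6 b_i c_i^k = 1/k! for every k = 0, 1, ..., 5; consequently r(x) = b_1 + \sum_{i=2}^6 b_i/(1 - c_i x) satisfies r(x) - e^x = O(x^6) as x \to 0. -/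
/-! Expanding each `1/(1 - cᵢx)` as a geometric series with remainder gives
`∑ᵢ bᵢ/(1 - cᵢx) = ∑_{k<n} (∑ᵢ bᵢcᵢᵏ) xᵏ + xⁿ ∑ᵢ bᵢcᵢⁿ/(1 - cᵢx)`. When the moments `∑ᵢ bᵢcᵢᵏ`
equal `1/k!` for `k < n`, the polynomial part is the Taylor polynomial of `exp` of degree `n - 1`,
and the remainder is bounded once `|cᵢx| ≤ 1/2`. -/

open Finset Nat Real

lemma one_div_one_sub_eq_geom_sum_add {𝕜 : Type*} [Field 𝕜] {y : 𝕜} (hy : y ≠ 1) (n : ℕ) :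
    1 / (1 - y) = ∑ k ∈ range n, y ^ k + y ^ n / (1 - y) := by
  have hy' : 1 - y ≠ 0 := sub_ne_zero.mpr hy.symm
  field_simp
  linear_combination geom_sum_mul y n

lemma sum_div_one_sub_mul_eq {ι 𝕜 : Type*} [Field 𝕜] (s : Finset ι) (b c : ι → 𝕜) {x : 𝕜}
    (hx : ∀ i ∈ s, c i * x ≠ 1) (n : ℕ) :
    ∑ i ∈ s, b i / (1 - c i * x) =
      ∑ k ∈ range n, (∑ i ∈ s, b i * c i ^ k) * x ^ k +
        x ^ n * ∑ i ∈ s, b i * c i ^ n / (1 - c i * x) := by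
  have hterm : ∀ i ∈ s, b i / (1 - c i * x) =
      ∑ k ∈ range n, b i * c i ^ k * x ^ k + x ^ n * (b i * c i ^ n / (1 - c i * x)) := by
    intro i hi
    rw [div_eq_mul_one_div, one_div_one_sub_eq_geom_sum_add (hx i hi) n, mul_add, mul_sum]
    congr 1
    · exact sum_congr rfl fun k _ => by ring
    · ring
  rw [sum_congr rfl hterm, sum_add_distrib, sum_comm, mul_sum]
  simp only [sum_mul]

lemma abs_sum_div_one_sub_le {ι : Type*} (s : Finset ι) (b y : ι → ℝ)
    (hy : ∀ i ∈ s, |y i| ≤ 1 / 2) :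
    |∑ i ∈ s, b i / (1 - y i)| ≤ 2 * ∑ i ∈ s, |b i| := by
  rw [mul_sum]
  refine (abs_sum_le_sum_abs _ _).trans (sum_le_sum fun i hi => ?_)
  have hden : 1 / 2 ≤ |1 - y i| := by
    have := abs_sub_abs_le_abs_sub 1 (y i)
    rw [abs_one] at this
    linarith [hy i hi]
  rw [abs_div, div_le_iff₀ (by linarith)]
  nlinarith [abs_nonneg (b i)]

theorem exists_abs_sum_div_one_sub_mul_sub_exp_le {ι : Type*} [Fintype ι] (b c : ι → ℝ) {n : ℕ}
    (hn : 0 < n) (hmoment : ∀ k < n, ∑ i, b i * c i ^ k = 1 / (k ! : ℝ)) :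
    ∃ C > (0 : ℝ), ∃ δ > (0 : ℝ), ∀ x : ℝ, |x| < δ →
      |∑ i, b i / (1 - c i * x) - exp x| ≤ C * |x| ^ n := by
  set S := ∑ i, |c i|
  have hS0 : 0 ≤ S := sum_nonneg fun i _ => abs_nonneg (c i)
  refine ⟨2 * ∑ i, |b i * c i ^ n| + n.succ / (n ! * n), by positivity,
    1 / (2 * (1 + S)), by positivity, fun x hx => ?_⟩
  have hsmall : ∀ i ∈ univ, |c i * x| ≤ 1 / 2 := by
    intro i _
    calc |c i * x| = |c i| * |x| := abs_mul _ _
      _ ≤ S * (1 / (2 * (1 + S))) :=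
          mul_le_mul (single_le_sum (fun j _ => abs_nonneg (c j)) (mem_univ i)) hx.le
            (abs_nonneg x) hS0
      _ ≤ 1 / 2 := by rw [mul_one_div, div_le_div_iff₀ (by positivity) two_pos]; linarith
  have hx1 : |x| ≤ 1 := hx.le.trans (by rw [div_le_one (by positivity)]; linarith)
  have hne : ∀ i ∈ univ, c i * x ≠ 1 := fun i hi h => by
    have := hsmall i hi
    rw [h, abs_one] at this
    norm_num at this
  have htaylor : ∑ k ∈ range n, (∑ i, b i * c i ^ k) * x ^ k = ∑ k ∈ range n, x ^ k / k ! :=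
    sum_congr rfl fun k hk => by rw [hmoment k (mem_range.mp hk), one_div_mul_eq_div]
  have hrem := abs_sum_div_one_sub_le univ (fun i => b i * c i ^ n) (fun i => c i * x) hsmall
  rw [sum_div_one_sub_mul_eq univ b c hne n, htaylor]
  calc |∑ k ∈ range n, x ^ k / k ! + x ^ n * ∑ i, b i * c i ^ n / (1 - c i * x) - exp x|
      ≤ |x ^ n * ∑ i, b i * c i ^ n / (1 - c i * x)| + |exp x - ∑ k ∈ range n, x ^ k / k !| := by
        rw [add_sub_right_comm, add_comm, abs_sub_comm (exp x)]
        exact abs_add_le _ _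
    _ ≤ |x| ^ n * (2 * ∑ i, |b i * c i ^ n|) + |x| ^ n * (n.succ / (n ! * n)) := by
        rw [abs_mul, abs_pow]
        exact add_le_add (mul_le_mul_of_nonneg_left hrem (by positivity)) (exp_bound hx1 hn)
    _ = _ := by ring

/-- The 5th-order fractional approximation to the exponential: with `c₁ = 0`,
`cᵢ = 1/(i+1)` for `i = 2, …, 6`, and
`b = (-43/12, 81/32, -704/9, 23125/48, -810, 117649/288)`, one has
`∑ᵢ bᵢ cᵢᵏ = 1/k!` for `k = 0, …, 5`, and hence
`r(x) = b₁ + ∑_{i=2}^{6} bᵢ/(1 - cᵢ x)` approximates `eˣ` to order 5 at the origin. -/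
theorem fractional_exp_order5_coeffs :
    let c : Fin 6 → ℝ := ![0, 1/3, 1/4, 1/5, 1/6, 1/7]
    let b : Fin 6 → ℝ := ![-43/12, 81/32, -704/9, 23125/48, -810, 117649/288]
    (∀ k : ℕ, k ≤ 5 → ∑ i, b i * c i ^ k = 1 / (k.factorial : ℝ)) ∧
      ∃ C > (0 : ℝ), ∃ δ > (0 : ℝ), ∀ x : ℝ, |x| < δ →
        |(b 0 + ∑ i : Fin 5, b i.succ / (1 - c i.succ * x)) - Real.exp x| ≤
          C * |x| ^ 6 := by
  intro c b
  have hmoment : ∀ k : ℕ, k ≤ 5 → ∑ i, b i * c i ^ k = 1 / (k.factorial : ℝ) := by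
    intro k hk
    interval_cases k <;> simp [Fin.sum_univ_six, b, c, Nat.factorial] <;> norm_num
  have hr : ∀ x : ℝ, b 0 + ∑ i : Fin 5, b i.succ / (1 - c i.succ * x) =
      ∑ i, b i / (1 - c i * x) := fun x => by
    rw [Fin.sum_univ_succ (f := fun i => b i / (1 - c i * x))]
    simp [show c 0 = 0 from rfl]
  obtain ⟨C, hC, δ, hδ, hbound⟩ :=
    exists_abs_sum_div_one_sub_mul_sub_exp_le b c (n := 6) (by norm_num)
      fun k hk => hmoment k (by omega)
  exact ⟨hmoment, C, hC, δ, hδ, fun x hx => hr x ▸ hbound x hx⟩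
end
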